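/- (Regularization.) Let m ≥ 2 be an integer and let y ∈ ℝ^m. Then there exists a nonempty subset A ⊆ {1,…,m} with comparable coordinates, i.e. |y(i)| ≤ 2|y(j)| for all i, j ∈ A, and with big energy: ‖y|_A‖₂ ≥ ‖y‖₂ / (2.5 √(log m)). -/

import Mathlib

/-!
Let `M = max |y i|` and sort the coordinates into dyadic shells
`M / 2^(k+1) < |y i| ≤ M / 2^k`; within a shell coordinates are comparable up to a factor 2.
With `4^K ≥ 2m`, the coordinates outside the first `K` shells satisfy `|y i| ≤ M / 2^K`,
so together they carry energy at most `m M² / 4^K ≤ M² / 2 ≤ ‖y‖² / 2`. By pigeonhole one of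
the first `K` shells carries energy at least `‖y‖² / (2K)`, and `2K ≤ 6.25 log m`.
-/

open Finset

noncomputable section

/-- `restr A y = y|_A`: the vector equal to `y` on `A` and zero elsewhere. -/
def restr {m : ℕ} (A : Finset (Fin m)) (y : EuclideanSpace ℝ (Fin m)) :
    EuclideanSpace ℝ (Fin m) :=
  WithLp.toLp 2 (fun i => if i ∈ A then y i else 0)

section DyadicShell

variable {ι : Type*} [Fintype ι] (f : ι → ℝ) (M : ℝ)

def dyadicShell (k : ℕ) : Finset ι := {i | M / 2 ^ (k + 1) < f i ∧ f i ≤ M / 2 ^ k}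

variable {f M}

theorem le_two_mul_of_mem_dyadicShell {k : ℕ} {i j : ι} (hi : i ∈ dyadicShell f M k)
    (hj : j ∈ dyadicShell f M k) : f i ≤ 2 * f j := by
  simp only [dyadicShell, mem_filter, mem_univ, true_and] at hi hj
  have : M / 2 ^ k = 2 * (M / 2 ^ (k + 1)) := by rw [pow_succ]; field_simp
  linarith [hi.2, hj.1]

theorem exists_mem_dyadicShell {i : ι} (hiM : f i ≤ M) :
    ∀ {K : ℕ}, M / 2 ^ K < f i → ∃ k < K, i ∈ dyadicShell f M k
  | 0, h => absurd hiM (by simpa using h)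
  | K + 1, h => by
    by_cases hK : M / 2 ^ K < f i
    · obtain ⟨k, hk, hik⟩ := exists_mem_dyadicShell hiM hK
      exact ⟨k, by omega, hik⟩
    · exact ⟨K, K.lt_succ_self, by simp [dyadicShell, h, not_lt.1 hK]⟩

theorem sum_sq_le_sum_dyadicShell_add (hf : ∀ i, 0 ≤ f i) (hfM : ∀ i, f i ≤ M) (K : ℕ) :
    ∑ i, f i ^ 2 ≤
      ∑ k ∈ range K, ∑ i ∈ dyadicShell f M k, f i ^ 2 + Fintype.card ι * (M / 2 ^ K) ^ 2 := by
  classical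
  calc ∑ i, f i ^ 2
      ≤ ∑ i, ((∑ k ∈ range K, if i ∈ dyadicShell f M k then f i ^ 2 else 0) + (M / 2 ^ K) ^ 2) := by
        refine sum_le_sum fun i _ => ?_
        have hshells : 0 ≤ ∑ k ∈ range K, if i ∈ dyadicShell f M k then f i ^ 2 else 0 :=
          sum_nonneg fun k _ => by positivity
        by_cases hsmall : f i ≤ M / 2 ^ K
        · nlinarith [pow_le_pow_left₀ (hf i) hsmall 2]
        · obtain ⟨k, hk, hik⟩ := exists_mem_dyadicShell (hfM i) (not_le.1 hsmall)
          have := single_le_sum (f := fun k => if i ∈ dyadicShell f M k then f i ^ 2 else 0)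
            (fun k _ => by positivity) (mem_range.2 hk)
          simp only [hik, if_true] at this
          nlinarith [sq_nonneg (M / 2 ^ K)]
    _ = _ := by
        rw [sum_add_distrib, sum_comm]
        simp

theorem exists_dyadicShell_sum_sq_ge (hf : ∀ i, 0 ≤ f i) (hfM : ∀ i, f i ≤ M)
    (hM : M ^ 2 ≤ ∑ i, f i ^ 2) {K : ℕ} (hK : 0 < K) (hcard : 2 * Fintype.card ι ≤ 4 ^ K) :
    ∃ k < K, (∑ i, f i ^ 2) / (2 * K) ≤ ∑ i ∈ dyadicShell f M k, f i ^ 2 := by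
  have htail : Fintype.card ι * (M / 2 ^ K) ^ 2 ≤ (∑ i, f i ^ 2) / 2 := by
    have hcard' : 2 * (Fintype.card ι : ℝ) ≤ 4 ^ K := by exact_mod_cast hcard
    calc Fintype.card ι * (M / 2 ^ K) ^ 2 = Fintype.card ι * M ^ 2 / 4 ^ K := by
          rw [div_pow, ← pow_mul, mul_comm K, pow_mul, mul_div_assoc]; norm_num
      _ ≤ M ^ 2 / 2 := by rw [div_le_div_iff₀ (by positivity) two_pos]; nlinarith [sq_nonneg M]
      _ ≤ _ := by linarith
  have hshells := sum_sq_le_sum_dyadicShell_add hf hfM K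
  obtain ⟨k, hk, hle⟩ := exists_le_of_sum_le (nonempty_range_iff.2 hK.ne')
    (f := fun _ => (∑ i, f i ^ 2) / (2 * K)) (g := fun k => ∑ i ∈ dyadicShell f M k, f i ^ 2) (by
      rw [sum_const, card_range, nsmul_eq_mul]
      have : (0 : ℝ) < K := by exact_mod_cast hK
      field_simp
      linarith)
  exact ⟨k, mem_range.1 hk, hle⟩

end DyadicShell

theorem two_mul_clog_le_log {m : ℕ} (hm : 2 ≤ m) :
    2 * (Nat.clog 4 (2 * m) : ℝ) ≤ 6.25 * Real.log m := by
  have hK : 1 ≤ Nat.clog 4 (2 * m) := Nat.clog_pos (by norm_num) (by omega)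
  have hpow : (4 : ℝ) ^ (Nat.clog 4 (2 * m) - 1) < 2 * m := by
    exact_mod_cast Nat.pow_pred_clog_lt_self (by norm_num) (by omega)
  have hlog := Real.log_le_log (by positivity) hpow.le
  rw [Real.log_pow, Nat.cast_sub hK, Nat.cast_one, Real.log_mul two_ne_zero (by positivity),
    show (4 : ℝ) = 2 ^ 2 by norm_num, Real.log_pow] at hlog
  have hm2 : Real.log 2 ≤ Real.log m := Real.log_le_log two_pos (by exact_mod_cast hm)
  have hlog2 := Real.log_two_gt_d9
  push_cast at hlog
  nlinarith

theorem norm_restr_sq {m : ℕ} (A : Finset (Fin m)) (y : EuclideanSpace ℝ (Fin m)) :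
    ‖restr A y‖ ^ 2 = ∑ i ∈ A, |y i| ^ 2 := by
  simp [EuclideanSpace.norm_sq_eq, restr, apply_ite, sum_ite_mem]

/-- Regularization lemma: every `y ∈ ℝ^m`, `m ≥ 2`, admits a nonempty subset `A` of
coordinates that are comparable (`|y(i)| ≤ 2|y(j)|` for `i, j ∈ A`) and carries a large
fraction of the energy: `‖y|_A‖₂ ≥ ‖y‖₂ / (2.5 √(log m))`. -/
theorem regularization {m : ℕ} (hm : 2 ≤ m) (y : EuclideanSpace ℝ (Fin m)) :
    ∃ A : Finset (Fin m), A.Nonempty ∧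
      (∀ i ∈ A, ∀ j ∈ A, |y i| ≤ 2 * |y j|) ∧
      ‖y‖ / (2.5 * Real.sqrt (Real.log m)) ≤ ‖restr A y‖ := by
  have : Nonempty (Fin m) := ⟨⟨0, by omega⟩⟩
  by_cases hy : y = 0
  · exact ⟨univ, univ_nonempty, by simp [hy], by simp [hy]⟩
  obtain ⟨iₘ, -, hiₘ⟩ := exists_max_image univ (fun i => |y i|) univ_nonempty
  have hnorm : ‖y‖ ^ 2 = ∑ i, |y i| ^ 2 := by simp [EuclideanSpace.norm_sq_eq]
  set K := Nat.clog 4 (2 * m)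
  have hK : 0 < K := Nat.clog_pos (by norm_num) (by omega)
  have hcard : 2 * Fintype.card (Fin m) ≤ 4 ^ K := by
    simpa using Nat.le_pow_clog (by norm_num) (2 * m)
  have hmax : |y iₘ| ^ 2 ≤ ∑ i, |y i| ^ 2 :=
    single_le_sum (f := fun i => |y i| ^ 2) (fun i _ => sq_nonneg _) (mem_univ iₘ)
  obtain ⟨k, -, hk⟩ := exists_dyadicShell_sum_sq_ge (fun i => abs_nonneg (y i))
    (fun i => hiₘ i (mem_univ i)) hmax hK hcard
  rw [← hnorm] at hk
  have hlog : 0 < Real.log m := Real.log_pos (by exact_mod_cast hm)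
  refine ⟨dyadicShell (fun i => |y i|) |y iₘ| k, ?_,
    fun i hi j hj => le_two_mul_of_mem_dyadicShell (f := fun i => |y i|) hi hj, ?_⟩
  · exact nonempty_of_sum_ne_zero ((by positivity : 0 < ‖y‖ ^ 2 / (2 * K)).trans_le hk).ne'
  · refine le_of_pow_le_pow_left₀ two_ne_zero (norm_nonneg _) ?_
    calc (‖y‖ / (2.5 * Real.sqrt (Real.log m))) ^ 2 = ‖y‖ ^ 2 / (6.25 * Real.log m) := by
          rw [div_pow, mul_pow, Real.sq_sqrt hlog.le]; norm_num
      _ ≤ ‖y‖ ^ 2 / (2 * K) :=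
          div_le_div_of_nonneg_left (by positivity) (by positivity) (two_mul_clog_le_log hm)
      _ ≤ _ := hk.trans_eq (norm_restr_sq _ _).symm
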